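/- arXiv:1711.06024 — 5 statements merged into one kernel-verified Lean document; each statement's English description precedes it below -/
import Mathlib

section
/- Let V be a finite set, G ⊆ V × V a reflexive edge relation, and Y, Z two probability distributions on V such that for every W ⊆ V, Z(W) ≤ Y(W) + Y(N(W)). Then there exists a stochastic matrix P on V with P_{j,i} = 0 whenever (i,j) ∉ G, such that Z = P Y. (Locality implies simulability by a local stochastic matrix.) -/
/-!
By compactness there is a flow along `G` from the supplies `Y` to the demands `Z` of maximal
total value. If a demand `j₀` were unmet, let `R` be the set of sinks reachable from `j₀` in the
residual network. A reachable source with spare supply would give an augmenting path, so every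
source adjacent to `R` is reachable and saturated, and sends all of its flow into `R`. Hence
`Y(W ∪ N(W)) < Z(W)` for `W = R`, against the hypothesis. So `Z` is met exactly, and since `Y`
and `Z` have the same mass, the flow is a coupling `f` of `Y` and `Z` supported on `G`;
then `P j i = f i j / Y i` works.
-/

open Finset Filter Topology

section SupplyDemand

variable {α β : Type*} [Fintype α] [Fintype β]

structure IsSubflow (G : α → β → Prop) (Y : α → ℝ) (Z : β → ℝ) (f : α → β → ℝ) : Prop where
  nonneg : ∀ a b, 0 ≤ f a b
  eq_zero_of_not_rel : ∀ a b, ¬ G a b → f a b = 0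
  row_le : ∀ a, ∑ b, f a b ≤ Y a
  col_le : ∀ b, ∑ a, f a b ≤ Z b

theorem isCompact_setOf_isSubflow (G : α → β → Prop) (Y : α → ℝ) (Z : β → ℝ) :
    IsCompact {f | IsSubflow G Y Z f} := by
  have hclosed : IsClosed {f | IsSubflow G Y Z f} := by
    have hset : {f | IsSubflow G Y Z f} =
        ({f | ∀ a b, 0 ≤ f a b} ∩ {f | ∀ a b, ¬ G a b → f a b = 0}) ∩
          ({f | ∀ a, ∑ b, f a b ≤ Y a} ∩ {f | ∀ b, ∑ a, f a b ≤ Z b}) := by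
      ext f
      exact ⟨fun h => ⟨⟨h.1, h.2⟩, h.3, h.4⟩, fun ⟨⟨h₁, h₂⟩, h₃, h₄⟩ => ⟨h₁, h₂, h₃, h₄⟩⟩
    simp only [hset, Set.ofPred_forall]
    refine ((isClosed_iInter fun a => isClosed_iInter fun b => ?_).inter
      (isClosed_iInter fun a => isClosed_iInter fun b => isClosed_iInter fun _ => ?_)).inter
      ((isClosed_iInter fun a => ?_).inter (isClosed_iInter fun b => ?_))
    all_goals first
      | exact isClosed_le (by fun_prop) (by fun_prop)
      | exact isClosed_eq (by fun_prop) (by fun_prop)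
  refine (isCompact_univ_pi fun _ => isCompact_univ_pi fun b => isCompact_Icc (a := 0) (b := Z b))
    |>.of_isClosed_subset hclosed fun f hf => ?_
  simp only [Set.mem_pi, Set.mem_univ, Set.mem_Icc, forall_const]
  exact fun a b => ⟨hf.nonneg a b,
    (single_le_sum (fun a _ => hf.nonneg a b) (mem_univ a)).trans (hf.col_le b)⟩

theorem exists_isSubflow_isMaxOn (G : α → β → Prop) {Y : α → ℝ} {Z : β → ℝ} (hY : ∀ a, 0 ≤ Y a)
    (hZ : ∀ b, 0 ≤ Z b) :
    ∃ f, IsSubflow G Y Z f ∧ IsMaxOn (fun f => ∑ a, ∑ b, f a b) {f | IsSubflow G Y Z f} f := by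
  have hzero : IsSubflow G Y Z 0 :=
    ⟨fun _ _ => le_rfl, fun _ _ _ => rfl, fun a => by simpa using hY a,
      fun b => by simpa using hZ b⟩
  exact (isCompact_setOf_isSubflow G Y Z).exists_isMaxOn ⟨0, hzero⟩ (by fun_prop)

/-- Reachability from `j₀` in the residual network of `f`: a source related to a reachable sink
could send it more, and a sink fed by a reachable source could send some of that back. -/
inductive ResidualReach (G : α → β → Prop) (f : α → β → ℝ) (j₀ : β) : α ⊕ β → Prop
  | refl : ResidualReach G f j₀ (.inr j₀)
  | source {i j} : ResidualReach G f j₀ (.inr j) → G i j → ResidualReach G f j₀ (.inl i)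
  | sink {i j} : ResidualReach G f j₀ (.inl i) → 0 < f i j → ResidualReach G f j₀ (.inr j)

theorem ResidualReach.exists_direction [DecidableEq α] [DecidableEq β] {G : α → β → Prop}
    {f : α → β → ℝ} {j₀ : β} (hf : ∀ a b, ¬ G a b → f a b = 0) {x : α ⊕ β}
    (hx : ResidualReach G f j₀ x) :
    ∃ d : α → β → ℝ, (∀ a b, d a b < 0 → 0 < f a b) ∧ (∀ a b, ¬ G a b → d a b = 0) ∧
      (∀ a, ∑ b, d a b = if x = .inl a then 1 else 0) ∧
      (∀ b, ∑ a, d a b = (if b = j₀ then 1 else 0) - if x = .inr b then 1 else 0) := by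
  induction hx with
  | refl => exact ⟨0, by simp, by simp, by simp, by simp [eq_comm]⟩
  | @source i j _ hij ih =>
    obtain ⟨d, hneg, hsupp, hrow, hcol⟩ := ih
    refine ⟨fun a b => d a b + if a = i ∧ b = j then 1 else 0, fun a b h => hneg a b ?_,
      fun a b h => ?_, fun a => ?_, fun b => ?_⟩
    · dsimp only at h
      split_ifs at h <;> linarith
    · dsimp only
      rw [hsupp a b h, if_neg (by rintro ⟨rfl, rfl⟩; exact h hij), add_zero]
    · simp [sum_add_distrib, hrow, ite_and, eq_comm]
    · simp [sum_add_distrib, hcol, ite_and, eq_comm]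
  | @sink i j _ hij ih =>
    obtain ⟨d, hneg, hsupp, hrow, hcol⟩ := ih
    refine ⟨fun a b => d a b - if a = i ∧ b = j then 1 else 0, fun a b h => ?_,
      fun a b h => ?_, fun a => ?_, fun b => ?_⟩
    · dsimp only at h
      split_ifs at h with hab
      · exact hab.1 ▸ hab.2 ▸ hij
      · exact hneg a b (by linarith)
    · have hGij : G i j := by_contra fun h => hij.ne' (hf i j h)
      dsimp only
      rw [hsupp a b h, if_neg (by rintro ⟨rfl, rfl⟩; exact h hGij), sub_zero]
    · simp [sum_sub_distrib, hrow, ite_and, eq_comm]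
    · simp [sum_sub_distrib, hcol, ite_and, eq_comm]

theorem eventually_nonneg_add_mul {x y : ℝ} (hx : 0 ≤ x) (hy : y < 0 → 0 < x) :
    ∀ᶠ ε in 𝓝[>] 0, 0 ≤ x + ε * y := by
  rcases hx.eq_or_lt with rfl | hx
  · filter_upwards [eventually_mem_nhdsWithin] with ε hε
    have : 0 ≤ y := not_lt.1 fun h => (hy h).false
    simpa using mul_nonneg (le_of_lt hε) this
  · have hlim : Tendsto (fun ε => x + ε * y) (𝓝 0) (𝓝 x) :=
      (continuous_const.add (continuous_id.mul continuous_const)).tendsto' _ _ (by simp)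
    exact ((hlim.eventually (lt_mem_nhds hx)).filter_mono nhdsWithin_le_nhds).mono
      fun _ => le_of_lt

variable {G : α → β → Prop} {Y : α → ℝ} {Z : β → ℝ} {f : α → β → ℝ}

theorem IsSubflow.row_eq_of_residualReach (hf : IsSubflow G Y Z f)
    (hmax : IsMaxOn (fun f => ∑ a, ∑ b, f a b) {f | IsSubflow G Y Z f} f) {j₀ : β}
    (hj₀ : ∑ a, f a j₀ < Z j₀) {i : α} (hi : ResidualReach G f j₀ (.inl i)) :
    ∑ b, f i b = Y i := by
  classical
  refine (hf.row_le i).eq_of_not_lt fun hi_lt => ?_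
  obtain ⟨d, hneg, hsupp, hrow, hcol⟩ := hi.exists_direction hf.eq_zero_of_not_rel
  simp only [Sum.inl.injEq, reduceCtorEq, if_false, sub_zero] at hrow hcol
  obtain ⟨ε, hε, hnonneg, hεY, hεZ⟩ := (eventually_mem_nhdsWithin.and <|
    (eventually_all.2 fun a => eventually_all.2 fun b =>
      eventually_nonneg_add_mul (hf.nonneg a b) (hneg a b)).and <|
    ((eventually_lt_nhds (sub_pos.2 hi_lt)).and
      (eventually_lt_nhds (sub_pos.2 hj₀))).filter_mono nhdsWithin_le_nhds).exists
  set g := fun a b => f a b + ε * d a b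
  have hrow_g (a : α) : ∑ b, g a b = ∑ b, f a b + ε * if i = a then 1 else 0 := by
    simp only [g, sum_add_distrib, ← mul_sum, hrow]
  have hcol_g (b : β) : ∑ a, g a b = ∑ a, f a b + ε * if b = j₀ then 1 else 0 := by
    simp only [g, sum_add_distrib, ← mul_sum, hcol]
  have hg : IsSubflow G Y Z g := by
    refine ⟨hnonneg, fun a b h => ?_, fun a => ?_, fun b => ?_⟩
    · simp [g, hf.eq_zero_of_not_rel a b h, hsupp a b h]
    · rw [hrow_g]
      split_ifs with h
      · subst h; linarith
      · simpa using hf.row_le a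
    · rw [hcol_g]
      split_ifs with h
      · subst h; linarith
      · simpa using hf.col_le b
  have htotal : ∑ a, ∑ b, g a b = ∑ a, ∑ b, f a b + ε := by
    simp [hrow_g, sum_add_distrib]
  linarith [isMaxOn_iff.1 hmax g hg, Set.mem_Ioi.1 hε]

open Classical in
theorem IsSubflow.col_eq_of_isMaxOn (hY : ∀ a, 0 ≤ Y a)
    (hall : ∀ W : Finset β, ∑ j ∈ W, Z j ≤ ∑ i ∈ univ.filter (fun i => ∃ j ∈ W, G i j), Y i)
    (hf : IsSubflow G Y Z f) (hmax : IsMaxOn (fun f => ∑ a, ∑ b, f a b) {f | IsSubflow G Y Z f} f)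
    (b : β) : ∑ a, f a b = Z b := by
  refine (hf.col_le b).eq_of_not_lt fun hb => ?_
  set S := univ.filter fun i => ResidualReach G f b (.inl i)
  set R := univ.filter fun j => ResidualReach G f b (.inr j)
  have hNS : univ.filter (fun i => ∃ j ∈ R, G i j) ⊆ S := by
    simp only [subset_iff, mem_filter, mem_univ, true_and, R, S]
    exact fun i ⟨j, hj, hij⟩ => hj.source hij
  have hS_to_R (i : α) (hi : i ∈ S) : ∑ j ∈ R, f i j = ∑ j, f i j := by
    refine sum_subset (subset_univ R) fun j _ hj => ?_
    refine (((hf.nonneg i j).eq_or_lt).resolve_right fun hij => hj ?_).symm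
    simp only [mem_filter, mem_univ, true_and, R, S] at hi ⊢
    exact hi.sink hij
  -- `R` violates Hall's condition: its neighbours are saturated and feed only `R`.
  have hb_mem : b ∈ R := by simp [R, ResidualReach.refl]
  refine lt_irrefl (∑ j ∈ R, Z j) ?_
  calc ∑ j ∈ R, Z j
      ≤ ∑ i ∈ univ.filter (fun i => ∃ j ∈ R, G i j), Y i := hall R
    _ ≤ ∑ i ∈ S, Y i := sum_le_sum_of_subset_of_nonneg hNS fun i _ _ => hY i
    _ = ∑ i ∈ S, ∑ j ∈ R, f i j := sum_congr rfl fun i hi =>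
      (hS_to_R i hi).trans (hf.row_eq_of_residualReach hmax hb (mem_filter.1 hi).2) |>.symm
    _ = ∑ j ∈ R, ∑ i ∈ S, f i j := sum_comm
    _ ≤ ∑ j ∈ R, ∑ i, f i j := sum_le_sum fun j _ =>
      sum_le_sum_of_subset_of_nonneg (subset_univ S) fun i _ _ => hf.nonneg i j
    _ < ∑ j ∈ R, Z j := sum_lt_sum (fun j _ => hf.col_le j) ⟨b, hb_mem, hb⟩

open Classical in
theorem exists_coupling_of_hall (hY : ∀ a, 0 ≤ Y a) (hZ : ∀ b, 0 ≤ Z b)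
    (hsum : ∑ a, Y a = ∑ b, Z b)
    (hall : ∀ W : Finset β, ∑ j ∈ W, Z j ≤ ∑ i ∈ univ.filter (fun i => ∃ j ∈ W, G i j), Y i) :
    ∃ f : α → β → ℝ, (∀ a b, 0 ≤ f a b) ∧ (∀ a b, ¬ G a b → f a b = 0) ∧
      (∀ a, ∑ b, f a b = Y a) ∧ ∀ b, ∑ a, f a b = Z b := by
  obtain ⟨f, hf, hmax⟩ := exists_isSubflow_isMaxOn G hY hZ
  have hcol := hf.col_eq_of_isMaxOn hY hall hmax
  have hrow : ∑ a, ∑ b, f a b = ∑ a, Y a := by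
    rw [sum_comm, hsum]
    exact sum_congr rfl fun b _ => hcol b
  refine ⟨f, hf.nonneg, hf.eq_zero_of_not_rel, fun a => ?_, hcol⟩
  exact (sum_eq_sum_iff_of_le fun a _ => hf.row_le a).1 hrow a (mem_univ a)

end SupplyDemand

theorem exists_stochastic_mulVec_eq_of_coupling {V : Type*} [Fintype V] {G : V → V → Prop}
    (hG : ∀ i, G i i) {Y Z : V → ℝ} {f : V → V → ℝ} (hf : ∀ i j, 0 ≤ f i j)
    (hfG : ∀ i j, ¬ G i j → f i j = 0) (hrow : ∀ i, ∑ j, f i j = Y i)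
    (hcol : ∀ j, ∑ i, f i j = Z j) :
    ∃ P : Matrix V V ℝ, (∀ i j, 0 ≤ P i j) ∧ (∀ i, ∑ j, P j i = 1) ∧
      (∀ i j, ¬ G i j → P j i = 0) ∧ P.mulVec Y = Z := by
  classical
  have hY (i : V) : 0 ≤ Y i := hrow i ▸ sum_nonneg fun j _ => hf i j
  have hf_eq_zero (i j : V) (hi : Y i = 0) : f i j = 0 :=
    (sum_eq_zero_iff_of_nonneg fun j _ => hf i j).1 (hrow i ▸ hi) j (mem_univ j)
  -- A column with `Y i = 0` is irrelevant to `P *ᵥ Y`; the identity column keeps it local.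
  refine ⟨Matrix.of fun j i => if Y i = 0 then if j = i then 1 else 0 else f i j / Y i,
    fun j i => ?_, fun i => ?_, fun i j hij => ?_, funext fun j => ?_⟩
  · simp only [Matrix.of_apply]
    split_ifs
    exacts [zero_le_one, le_rfl, div_nonneg (hf i j) (hY i)]
  · by_cases hi : Y i = 0
    · simp [hi]
    · simp [hi, ← sum_div, hrow, div_self]
  · by_cases hi : Y i = 0
    · simp [hi, show j ≠ i by rintro rfl; exact hij (hG j)]
    · simp [hi, hfG i j hij]
  · simp only [Matrix.mulVec, dotProduct, Matrix.of_apply, ← hcol j]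
    refine sum_congr rfl fun i _ => ?_
    by_cases hi : Y i = 0
    · simp [hi, hf_eq_zero i j hi]
    · simp [hi]

open Classical in
theorem sum_add_sum_filter_notMem_exists_rel {V : Type*} [Fintype V] [DecidableEq V]
    {G : V → V → Prop} (hG : ∀ i, G i i) (Y : V → ℝ) (W : Finset V) :
    ∑ i ∈ W, Y i + ∑ i ∈ univ.filter (fun i => i ∉ W ∧ ∃ j ∈ W, G i j), Y i =
      ∑ i ∈ univ.filter (fun i => ∃ j ∈ W, G i j), Y i := by
  rw [← sum_union (disjoint_left.2 fun i hi h => (mem_filter.1 h).2.1 hi)]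
  congr 1
  ext i
  simp only [mem_union, mem_filter, mem_univ, true_and]
  exact ⟨by rintro (hi | ⟨-, h⟩); exacts [⟨i, hi, hG i⟩, h],
    fun h => or_iff_not_imp_left.2 fun hi => ⟨hi, h⟩⟩

open Classical in
/-- Locality implies simulability: if `Z(W) ≤ Y(W) + Y(N(W))` for all `W`,
then `Z = P Y` for some local stochastic matrix `P`. -/
theorem stmt_1 {V : Type*} [Fintype V] [DecidableEq V]
    (G : V → V → Prop) (hrefl : ∀ i, G i i)
    (Y Z : V → ℝ)
    (hYnn : ∀ i, 0 ≤ Y i) (hY1 : ∑ i, Y i = 1)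
    (hZnn : ∀ i, 0 ≤ Z i) (hZ1 : ∑ i, Z i = 1)
    (hlocflow : ∀ W : Finset V,
      ∑ i ∈ W, Z i ≤ ∑ i ∈ W, Y i +
        ∑ i ∈ Finset.univ.filter (fun i => i ∉ W ∧ ∃ j ∈ W, G i j), Y i) :
    ∃ P : Matrix V V ℝ,
      (∀ i j, 0 ≤ P i j) ∧ (∀ i, ∑ j, P j i = 1) ∧
      (∀ i j, ¬ G i j → P j i = 0) ∧
      P.mulVec Y = Z := by
  have hall (W : Finset V) :=
    (hlocflow W).trans_eq (sum_add_sum_filter_notMem_exists_rel hrefl Y W)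
  obtain ⟨f, hf, hfG, hrow, hcol⟩ := exists_coupling_of_hall hYnn hZnn (hY1.trans hZ1.symm) hall
  exact exists_stochastic_mulVec_eq_of_coupling hrefl hf hfG hrow hcol
end

section
/- Let V be a finite set, and consider the bipartite capacitated network with source s, sink t, and two copies V, V' of the nodes: s connects to i ∈ V with capacity Y(i), i ∈ V connects to j ∈ V' with capacity 1 iff (i,j) ∈ G, and j ∈ V' connects to t with capacity Z(j), where Y, Z are probability distributions. If for every W ⊆ V, Z(W) ≤ Y(W ∪ N(W)), then every s-t cut in this network has value at least 1. -/
open Classical in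
/-- In the capacitated network with source `s`, copies `V` and `V'`, and sink `t`,
if `Z(W) ≤ Y(W ∪ N(W))` for every `W`, then every s-t cut (determined by the node
sets `S ⊆ V`, `S' ⊆ V'` on the source side) has value at least 1. -/
theorem stmt_2 {V : Type*} [Fintype V] [DecidableEq V]
    (G : V → V → Prop) (hrefl : ∀ i, G i i)
    (Y Z : V → ℝ)
    (hYnn : ∀ i, 0 ≤ Y i) (hY1 : ∑ i, Y i = 1)
    (hZnn : ∀ i, 0 ≤ Z i) (hZ1 : ∑ i, Z i = 1)
    (hflow : ∀ W : Finset V,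
      ∑ j ∈ W, Z j ≤
        ∑ i ∈ W ∪ Finset.univ.filter (fun i => i ∉ W ∧ ∃ j ∈ W, G i j), Y i)
    (S S' : Finset V) :
    1 ≤ (∑ i ∈ Sᶜ, Y i)
        + (∑ p ∈ (S ×ˢ S'ᶜ).filter (fun p => G p.1 p.2), (1 : ℝ))
        + ∑ j ∈ S', Z j := by
  classical
  set T : Finset V :=
    S'ᶜ ∪ Finset.univ.filter (fun i => i ∉ S'ᶜ ∧ ∃ j ∈ S'ᶜ, G i j) with hT
  have h1 : ∑ j ∈ S'ᶜ, Z j ≤ ∑ i ∈ T, Y i := hflow S'ᶜ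
  have hZsplit : ∑ j ∈ S', Z j + ∑ j ∈ S'ᶜ, Z j = 1 := by
    rw [Finset.sum_add_sum_compl]; exact hZ1
  have hYle1 : ∀ i, Y i ≤ 1 := fun i =>
    hY1 ▸ Finset.single_le_sum (fun j _ => hYnn j) (Finset.mem_univ i)
  -- witnesses for i ∈ T ∩ S
  have hchoice : ∀ i ∈ T ∩ S, ∃ j ∈ S'ᶜ, G i j := by
    intro i hi
    rw [Finset.mem_inter, hT, Finset.mem_union, Finset.mem_filter] at hi
    rcases hi.1 with h | h
    · exact ⟨i, h, hrefl i⟩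
    · exact h.2.2
  set f : V → V × V := fun i =>
    (i, if h : ∃ j ∈ S'ᶜ, G i j then h.choose else i) with hf
  have hmap : ∀ i ∈ T ∩ S, f i ∈ (S ×ˢ S'ᶜ).filter (fun p => G p.1 p.2) := by
    intro i hi
    have hw := hchoice i hi
    have hiS : i ∈ S := (Finset.mem_inter.mp hi).2
    simp only [hf, dif_pos hw]
    have h1 := hw.choose_spec.1
    have h2 := hw.choose_spec.2
    refine Finset.mem_filter.mpr ⟨Finset.mem_product.mpr ⟨hiS, ?_⟩, ?_⟩
    · exact hw.choose_spec.1
    · exact hw.choose_spec.2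
  have hinj : Set.InjOn f ↑(T ∩ S) := by
    intro a _ b _ hab
    exact congrArg Prod.fst hab
  have hcard : (T ∩ S).card ≤ ((S ×ˢ S'ᶜ).filter (fun p => G p.1 p.2)).card :=
    Finset.card_le_card_of_injOn f hmap hinj
  have hsub : T ⊆ Sᶜ ∪ (T ∩ S) := by
    intro i hi
    by_cases h : i ∈ S
    · exact Finset.mem_union_right _ (Finset.mem_inter.mpr ⟨hi, h⟩)
    · exact Finset.mem_union_left _ (Finset.mem_compl.mpr h)
  have hdisj : Disjoint Sᶜ (T ∩ S) := by
    apply Finset.disjoint_left.mpr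
    intro a ha hb
    exact (Finset.mem_compl.mp ha) (Finset.mem_inter.mp hb).2
  have h2 : ∑ i ∈ T, Y i ≤ ∑ i ∈ Sᶜ, Y i + ∑ i ∈ T ∩ S, Y i := by
    calc ∑ i ∈ T, Y i ≤ ∑ i ∈ Sᶜ ∪ (T ∩ S), Y i :=
          Finset.sum_le_sum_of_subset_of_nonneg hsub (fun i _ _ => hYnn i)
      _ = ∑ i ∈ Sᶜ, Y i + ∑ i ∈ T ∩ S, Y i := Finset.sum_union hdisj
  have h3 : ∑ i ∈ T ∩ S, Y i ≤
      ∑ p ∈ (S ×ˢ S'ᶜ).filter (fun p => G p.1 p.2), (1 : ℝ) := by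
    calc ∑ i ∈ T ∩ S, Y i ≤ ∑ _i ∈ T ∩ S, (1 : ℝ) :=
          Finset.sum_le_sum (fun i _ => hYle1 i)
      _ = ((T ∩ S).card : ℝ) := by simp
      _ ≤ (((S ×ˢ S'ᶜ).filter (fun p => G p.1 p.2)).card : ℝ) := by
          exact_mod_cast hcard
      _ = ∑ p ∈ (S ×ˢ S'ᶜ).filter (fun p => G p.1 p.2), (1 : ℝ) := by simp
  linarith
end

section
/- Let P be a stochastic matrix on a finite set V with P Π = Π. If τ is such that ‖P^t X − Π‖₁ ≤ 1/2 for all distributions X and all t ≥ τ, then for every W ⊆ V with Π(W) ≤ 1/2, τ · Q(W)/Π(W) ≥ 1/4, where Q(W) = ∑_{i∈W, j∉W} P_{j,i} Π(i); consequently τ ≥ Π(W)/(4 Q(W)). (Conductance lower bound on mixing time for Markov chains.) -/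
open Classical in
/-- Conductance lower bound on the mixing time of a Markov chain: if
`‖P^t X − Π‖₁ ≤ 1/2` for all distributions `X` and `t ≥ τ`, then for every `W`
with `Π(W) ≤ 1/2` we have `τ · Q(W)/Π(W) ≥ 1/4`, hence `τ ≥ Π(W)/(4 Q(W))`. -/
theorem stmt_7 {V : Type*} [Fintype V] [DecidableEq V]
    (P : Matrix V V ℝ)
    (hnn : ∀ i j, 0 ≤ P i j)
    (hcol : ∀ i, ∑ j, P j i = 1)
    (Pi : V → ℝ) (hPinn : ∀ i, 0 ≤ Pi i) (hPi1 : ∑ i, Pi i = 1)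
    (hinv : P.mulVec Pi = Pi)
    (τ : ℕ)
    (hmix : ∀ X : V → ℝ, (∀ i, 0 ≤ X i) → (∑ i, X i = 1) →
      ∀ t ≥ τ, ∑ i, |(P ^ t).mulVec X i - Pi i| ≤ 1 / 2)
    (W : Finset V) (hWpos : 0 < ∑ i ∈ W, Pi i)
    (hWhalf : ∑ i ∈ W, Pi i ≤ 1 / 2) :
    (1 : ℝ) / 4 ≤ (τ : ℝ) * (∑ i ∈ W, ∑ j ∈ Wᶜ, P j i * Pi i) / ∑ i ∈ W, Pi i ∧
    (∑ i ∈ W, Pi i) / (4 * ∑ i ∈ W, ∑ j ∈ Wᶜ, P j i * Pi i) ≤ (τ : ℝ) := by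
  set π : ℝ := ∑ i ∈ W, Pi i with hπ
  set Q : ℝ := ∑ i ∈ W, ∑ j ∈ Wᶜ, P j i * Pi i with hQ
  have hQnn : 0 ≤ Q := by
    apply Finset.sum_nonneg; intro i _
    exact Finset.sum_nonneg fun j _ => mul_nonneg (hnn j i) (hPinn i)
  -- the initial distribution: Π conditioned on W
  set X : V → ℝ := fun i => if i ∈ W then Pi i / π else 0 with hX
  have hXnn : ∀ i, 0 ≤ X i := by
    intro i; simp only [hX]
    split
    · exact div_nonneg (hPinn i) hWpos.le
    · exact le_refl 0
  have hXsum : ∑ i, X i = 1 := by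
    rw [Finset.sum_ite_mem, Finset.univ_inter, ← Finset.sum_div, ← hπ,
      div_self hWpos.ne']
  have hXle : ∀ i, X i ≤ Pi i / π := by
    intro i; simp only [hX]
    split
    · exact le_refl _
    · exact div_nonneg (hPinn i) hWpos.le
  -- pointwise bounds propagate
  have key : ∀ t : ℕ, (∀ i, 0 ≤ (P ^ t).mulVec X i) ∧
      (∀ i, (P ^ t).mulVec X i ≤ Pi i / π) := by
    intro t
    induction t with
    | zero =>
        simp only [pow_zero, Matrix.one_mulVec]
        exact ⟨hXnn, hXle⟩
    | succ n ih =>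
        have hrw : (P ^ (n + 1)).mulVec X = P.mulVec ((P ^ n).mulVec X) := by
          rw [Matrix.mulVec_mulVec, ← pow_succ']
        constructor
        · intro i
          rw [hrw]
          exact Finset.sum_nonneg fun j _ => mul_nonneg (hnn i j) (ih.1 j)
        · intro i
          rw [hrw]
          have h1 : P.mulVec ((P ^ n).mulVec X) i ≤ P.mulVec (fun j => Pi j / π) i := by
            apply Finset.sum_le_sum
            intro j _
            exact mul_le_mul_of_nonneg_left (ih.2 j) (hnn i j)
          have h2 : P.mulVec (fun j => Pi j / π) i = Pi i / π := by
            have : (fun j => Pi j / π) = π⁻¹ • Pi := by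
              funext j; simp [div_eq_inv_mul, mul_comm]
            rw [this, Matrix.mulVec_smul, hinv]
            simp [div_eq_inv_mul]
          exact h1.trans (le_of_eq h2)
  -- the total mass is preserved
  have hsum : ∀ t : ℕ, ∑ i, (P ^ t).mulVec X i = 1 := by
    intro t
    induction t with
    | zero => simpa [Matrix.one_mulVec] using hXsum
    | succ n ih =>
        have hrw : (P ^ (n + 1)).mulVec X = P.mulVec ((P ^ n).mulVec X) := by
          rw [Matrix.mulVec_mulVec, ← pow_succ']
        rw [hrw]
        calc ∑ j, P.mulVec ((P ^ n).mulVec X) j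
            = ∑ i, (∑ j, P j i) * (P ^ n).mulVec X i := by
              simp only [Matrix.mulVec, dotProduct]
              rw [Finset.sum_comm]
              simp_rw [Finset.sum_mul]
          _ = 1 := by simp only [hcol, one_mul]; exact ih
  -- the flow bound: mass outside W grows by at most Q/π per step
  have flow : ∀ t : ℕ, ∑ j ∈ Wᶜ, (P ^ t).mulVec X j ≤ t * Q / π := by
    intro t
    induction t with
    | zero =>
        simp only [pow_zero, Matrix.one_mulVec, Nat.cast_zero, zero_mul, zero_div]
        have : ∑ j ∈ Wᶜ, X j = 0 := by
          apply Finset.sum_eq_zero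
          intro j hj
          simp only [hX, if_neg (Finset.mem_compl.mp hj)]
        rw [this]
    | succ n ih =>
        have hrw : (P ^ (n + 1)).mulVec X = P.mulVec ((P ^ n).mulVec X) := by
          rw [Matrix.mulVec_mulVec, ← pow_succ']
        set Y : V → ℝ := (P ^ n).mulVec X with hY
        have hsplit : ∑ j ∈ Wᶜ, P.mulVec Y j
            = ∑ i ∈ W, ∑ j ∈ Wᶜ, P j i * Y i + ∑ i ∈ Wᶜ, ∑ j ∈ Wᶜ, P j i * Y i := by
          simp only [Matrix.mulVec, dotProduct]
          rw [Finset.sum_comm]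
          exact (Finset.sum_add_sum_compl W _).symm
        have hb1 : ∑ i ∈ W, ∑ j ∈ Wᶜ, P j i * Y i ≤ Q / π := by
          rw [hQ, Finset.sum_div]
          apply Finset.sum_le_sum
          intro i hi
          rw [Finset.sum_div]
          apply Finset.sum_le_sum
          intro j _
          rw [mul_div_assoc]
          exact mul_le_mul_of_nonneg_left ((key n).2 i) (hnn j i)
        have hb2 : ∑ i ∈ Wᶜ, ∑ j ∈ Wᶜ, P j i * Y i ≤ ∑ i ∈ Wᶜ, Y i := by
          apply Finset.sum_le_sum
          intro i _
          have hle1 : ∑ j ∈ Wᶜ, P j i ≤ 1 := by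
            rw [← hcol i]
            exact Finset.sum_le_sum_of_subset_of_nonneg (Finset.subset_univ _)
              (fun j _ _ => hnn j i)
          calc ∑ j ∈ Wᶜ, P j i * Y i = (∑ j ∈ Wᶜ, P j i) * Y i := (Finset.sum_mul _ _ _).symm
            _ ≤ 1 * Y i := mul_le_mul_of_nonneg_right hle1 ((key n).1 i)
            _ = Y i := one_mul _
        rw [hrw, hsplit]
        have : (↑(n + 1) : ℝ) * Q / π = Q / π + n * Q / π := by
          push_cast; ring
        rw [this]
        exact add_le_add hb1 (hb2.trans ih)
  -- apply the mixing hypothesis at time τ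
  have hm := hmix X hXnn hXsum τ le_rfl
  set Y : V → ℝ := (P ^ τ).mulVec X with hY
  -- positive part identity
  have hpos : ∑ i, max (Pi i - Y i) 0 ≤ 1 / 4 := by
    have h0 : ∑ i, (Pi i - Y i) = 0 := by
      rw [Finset.sum_sub_distrib, hPi1, hsum τ, sub_self]
    have hmax : ∀ i, max (Pi i - Y i) 0 = ((Pi i - Y i) + |Pi i - Y i|) / 2 := by
      intro i; rcases le_or_gt 0 (Pi i - Y i) with h | h
      · rw [max_eq_left h, abs_of_nonneg h]; ring
      · rw [max_eq_right h.le, abs_of_neg h]; ring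
    calc ∑ i, max (Pi i - Y i) 0
        = (∑ i, (Pi i - Y i) + ∑ i, |Pi i - Y i|) / 2 := by
          simp_rw [hmax]; rw [← Finset.sum_add_distrib, Finset.sum_div]
      _ ≤ (0 + 1/2) / 2 := by
          apply div_le_div_of_nonneg_right _ (by norm_num)
          apply add_le_add (le_of_eq h0)
          simpa [hY, abs_sub_comm] using hm
      _ = 1 / 4 := by norm_num
  -- the main inequality
  have hPiWc : ∑ j ∈ Wᶜ, Pi j = 1 - π := by
    have := Finset.sum_add_sum_compl W Pi
    rw [hPi1] at this; linarith
  have hchain : 1 / 2 - τ * Q / π ≤ 1 / 4 := by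
    have h1 : ∑ j ∈ Wᶜ, (Pi j - Y j) ≤ ∑ i, max (Pi i - Y i) 0 := by
      calc ∑ j ∈ Wᶜ, (Pi j - Y j) ≤ ∑ j ∈ Wᶜ, max (Pi j - Y j) 0 :=
            Finset.sum_le_sum fun j _ => le_max_left _ _
        _ ≤ ∑ i, max (Pi i - Y i) 0 :=
            Finset.sum_le_sum_of_subset_of_nonneg (Finset.subset_univ _)
              (fun j _ _ => le_max_right _ _)
    have h2 : ∑ j ∈ Wᶜ, (Pi j - Y j) = (1 - π) - ∑ j ∈ Wᶜ, Y j := by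
      rw [Finset.sum_sub_distrib, hPiWc]
    have h3 := flow τ
    rw [← hY] at h3
    linarith
  have main : (1 : ℝ) / 4 ≤ (τ : ℝ) * Q / π := by linarith
  refine ⟨main, ?_⟩
  have hQpos : 0 < Q := by
    by_contra h
    push_neg at h
    have hQ0 : Q = 0 := le_antisymm h hQnn
    rw [hQ0, mul_zero, zero_div] at main
    linarith
  rw [div_le_iff₀ (by positivity)]
  rw [le_div_iff₀ hWpos] at main
  linarith
end

section
/- Let P be a stochastic matrix on a finite set V. The Cesàro-mixing system X_0 ↦ X_t = (1/(t+1)) ∑_{k=0}^{t} P^k X_0 is linear in X_0 and local with respect to any graph G for which P is local: for every W ⊆ V and t ≥ 0, X_{t+1}(W) ≤ X_t(W) + X_t(N(W)). -/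
open Classical in
/-- The Cesàro-mixing system `X_t = (1/(t+1)) ∑_{k≤t} P^k X₀` is linear in `X₀`
and local with respect to any graph `G` for which `P` is local. -/
theorem stmt_9 {V : Type*} [Fintype V] [DecidableEq V]
    (G : V → V → Prop) (hrefl : ∀ i, G i i)
    (P : Matrix V V ℝ)
    (hnn : ∀ i j, 0 ≤ P i j)
    (hcol : ∀ i, ∑ j, P j i = 1)
    (hloc : ∀ i j, ¬ G i j → P j i = 0) :
    -- linearity in the initial condition
    (∀ (X₀ Y₀ : V → ℝ) (p : ℝ) (t : ℕ),
      (fun j => (1 / (t + 1 : ℝ)) *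
          ∑ k ∈ Finset.range (t + 1), (P ^ k).mulVec (p • X₀ + (1 - p) • Y₀) j) =
        p • (fun j => (1 / (t + 1 : ℝ)) *
              ∑ k ∈ Finset.range (t + 1), (P ^ k).mulVec X₀ j)
          + (1 - p) • (fun j => (1 / (t + 1 : ℝ)) *
              ∑ k ∈ Finset.range (t + 1), (P ^ k).mulVec Y₀ j)) ∧
    -- locality: X_{t+1}(W) ≤ X_t(W) + X_t(N(W))
    (∀ (X₀ : V → ℝ), (∀ i, 0 ≤ X₀ i) → (∑ i, X₀ i = 1) →
      ∀ (t : ℕ) (W : Finset V),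
        ∑ j ∈ W, (1 / (t + 2 : ℝ)) *
            ∑ k ∈ Finset.range (t + 2), (P ^ k).mulVec X₀ j ≤
          (∑ j ∈ W, (1 / (t + 1 : ℝ)) *
              ∑ k ∈ Finset.range (t + 1), (P ^ k).mulVec X₀ j)
            + ∑ j ∈ Finset.univ.filter (fun i => i ∉ W ∧ ∃ l ∈ W, G i l),
                (1 / (t + 1 : ℝ)) *
                  ∑ k ∈ Finset.range (t + 1), (P ^ k).mulVec X₀ j) := by
  constructor
  · -- linearity
    intro X₀ Y₀ p t
    funext j
    simp only [Matrix.mulVec_add, Matrix.mulVec_smul, Pi.add_apply, Pi.smul_apply,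
      smul_eq_mul]
    rw [Finset.sum_add_distrib, ← Finset.mul_sum, ← Finset.mul_sum]
    ring
  · -- locality
    intro X₀ hX0 _ t W
    set Nset : Finset V := Finset.univ.filter (fun i => i ∉ W ∧ ∃ l ∈ W, G i l) with hNset
    -- nonnegativity of the iterates
    have hpos : ∀ (k : ℕ) (j : V), 0 ≤ (P ^ k).mulVec X₀ j := by
      intro k
      induction k with
      | zero => intro j; simpa using hX0 j
      | succ n ih =>
          intro j
          rw [pow_succ', ← Matrix.mulVec_mulVec]
          exact Finset.sum_nonneg fun i _ => mul_nonneg (hnn j i) (ih i)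
    set f : ℕ → ℝ := fun k => ∑ j ∈ W, (P ^ k).mulVec X₀ j with hf
    set g : ℕ → ℝ := fun k => ∑ j ∈ Nset, (P ^ k).mulVec X₀ j with hg
    have hgnn : ∀ k, 0 ≤ g k := fun k =>
      Finset.sum_nonneg fun j _ => hpos k j
    have hfnn : ∀ k, 0 ≤ f k := fun k =>
      Finset.sum_nonneg fun j _ => hpos k j
    have hdisj : Disjoint W Nset := by
      rw [Finset.disjoint_left]
      intro a haW haN
      rw [hNset, Finset.mem_filter] at haN
      exact haN.2.1 haW
    -- one-step locality
    have step : ∀ k, f (k + 1) ≤ f k + g k := by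
      intro k
      set Y : V → ℝ := fun i => (P ^ k).mulVec X₀ i with hY
      have hYk : ∀ i, 0 ≤ Y i := hpos k
      have hrw : f (k + 1) = ∑ i, (∑ j ∈ W, P j i) * Y i := by
        have h1 : f (k + 1) = ∑ j ∈ W, ∑ i, P j i * Y i := by
          simp only [hf, pow_succ', ← Matrix.mulVec_mulVec]
          rfl
        rw [h1, Finset.sum_comm]
        simp [Finset.sum_mul]
      have hcoef : ∀ i, (∑ j ∈ W, P j i) * Y i ≤ (if i ∈ W ∪ Nset then Y i else 0) := by
        intro i
        by_cases hi : i ∈ W ∪ Nset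
        · rw [if_pos hi]
          have hle1 : (∑ j ∈ W, P j i) ≤ 1 := by
            rw [← hcol i]
            exact Finset.sum_le_sum_of_subset_of_nonneg (Finset.subset_univ W)
              (fun j _ _ => hnn j i)
          exact mul_le_of_le_one_left (hYk i) hle1
        · rw [if_neg hi]
          rw [Finset.mem_union] at hi
          push_neg at hi
          have hz : ∀ j ∈ W, P j i = 0 := by
            intro j hj
            refine hloc i j ?_
            intro hG
            apply hi.2
            rw [hNset, Finset.mem_filter]
            exact ⟨Finset.mem_univ i, hi.1, j, hj, hG⟩
          rw [Finset.sum_eq_zero hz, zero_mul]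
      calc f (k + 1) = ∑ i, (∑ j ∈ W, P j i) * Y i := hrw
        _ ≤ ∑ i, (if i ∈ W ∪ Nset then Y i else 0) :=
            Finset.sum_le_sum fun i _ => hcoef i
        _ = ∑ i ∈ W ∪ Nset, Y i := by
            rw [Finset.sum_ite_mem, Finset.univ_inter]
        _ = f k + g k := by
            rw [Finset.sum_union hdisj]
    -- iterated locality
    have chain : ∀ k n, k ≤ n → f n ≤ f k + ∑ j ∈ Finset.Ico k n, g j := by
      intro k
      refine Nat.le_induction ?_ ?_
      · simp
      · intro n hkn ih
        calc f (n + 1) ≤ f n + g n := step n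
          _ ≤ (f k + ∑ j ∈ Finset.Ico k n, g j) + g n := by linarith
          _ = f k + ∑ j ∈ Finset.Ico k (n + 1), g j := by
              rw [Finset.sum_Ico_succ_top hkn]; ring
    set B : ℝ := ∑ k ∈ Finset.range (t + 1), g k with hB
    have hBnn : 0 ≤ B := Finset.sum_nonneg fun k _ => hgnn k
    have key : ∀ k ∈ Finset.range (t + 1), f (t + 1) ≤ f k + B := by
      intro k hk
      have hk' : k ≤ t + 1 := le_of_lt (Finset.mem_range.mp hk)
      refine (chain k (t + 1) hk').trans ?_
      gcongr
      refine Finset.sum_le_sum_of_subset_of_nonneg ?_ (fun j _ _ => hgnn j)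
      rw [← Nat.Ico_zero_eq_range]
      exact Finset.Ico_subset_Ico (Nat.zero_le k) le_rfl
    set A : ℝ := ∑ k ∈ Finset.range (t + 1), f k with hA
    have hsum : (t + 1 : ℝ) * f (t + 1) ≤ A + (t + 1 : ℝ) * B := by
      have h := Finset.sum_le_sum key
      simp only [Finset.sum_const, Finset.card_range, nsmul_eq_mul,
        Finset.sum_add_distrib] at h
      push_cast at h
      linarith
    -- rewrite the goal
    have lhs_eq : ∑ j ∈ W, (1 / (t + 2 : ℝ)) *
        ∑ k ∈ Finset.range (t + 2), (P ^ k).mulVec X₀ j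
        = (A + f (t + 1)) / (t + 2 : ℝ) := by
      rw [← Finset.mul_sum, Finset.sum_comm]
      rw [show (∑ k ∈ Finset.range (t + 2), ∑ j ∈ W, (P ^ k).mulVec X₀ j)
          = ∑ k ∈ Finset.range (t + 2), f k by simp [hf]]
      rw [Finset.sum_range_succ, ← hA]
      ring
    have rhs_eq : (∑ j ∈ W, (1 / (t + 1 : ℝ)) *
          ∑ k ∈ Finset.range (t + 1), (P ^ k).mulVec X₀ j)
        + ∑ j ∈ Nset, (1 / (t + 1 : ℝ)) *
            ∑ k ∈ Finset.range (t + 1), (P ^ k).mulVec X₀ j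
        = (A + B) / (t + 1 : ℝ) := by
      rw [← Finset.mul_sum, ← Finset.mul_sum, Finset.sum_comm, Finset.sum_comm (s := Nset)]
      rw [show (∑ k ∈ Finset.range (t + 1), ∑ j ∈ W, (P ^ k).mulVec X₀ j)
          = ∑ k ∈ Finset.range (t + 1), f k by simp [hf]]
      rw [show (∑ k ∈ Finset.range (t + 1), ∑ j ∈ Nset, (P ^ k).mulVec X₀ j)
          = ∑ k ∈ Finset.range (t + 1), g k by simp [hg]]
      rw [← hA, ← hB]
      ring
    rw [lhs_eq, rhs_eq]
    rw [div_le_div_iff₀ (by positivity) (by positivity)]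
    nlinarith [hsum, hBnn, hfnn (t + 1)]
end

section
/- Let a system map distributions X_0 on a finite set V to X_t, satisfying linearity in X_0 and the property that X_t = P(t, X_0) X_{t−1} for stochastic matrices P(t, X_0) local to graph G. Suppose all initial point distributions e_i evolve under the lifted chain M started at v[X_0] = ∑_i X_0(i) e_i ⊗ e_0 ⊗ e_i. Then for all t ≤ τ, the marginal of M^t v[X_0] on the third coordinate equals X_t. -/
open Classical in
/-- The lifted transition matrix `M` on `V̂ = V × {0,…,τ−1} × V`, built from
time- and start-node-dependent transition matrices `P t i = P(t, eᵢ)`. -/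
noncomputable def liftedChain {V : Type*} [Fintype V] [DecidableEq V] (τ : ℕ)
    (P : ℕ → V → Matrix V V ℝ) :
    Matrix (V × Fin τ × V) (V × Fin τ × V) ℝ :=
  fun p' p =>
    if h : (p.2.1 : ℕ) + 1 < τ then
      (if p'.1 = p.1 ∧ p'.2.1 = ⟨(p.2.1 : ℕ) + 1, h⟩ then
        P p.2.1 p.1 p'.2.2 p.2.2 else 0)
    else
      (if (p'.2.1 : ℕ) = 0 ∧ p'.1 = p'.2.2 then
        P p.2.1 p.1 p'.2.2 p.2.2 else 0)

open Classical in
/-- Evolution of the point mass `eᵢ`: `X_t(eᵢ) = P(t−1,eᵢ)⋯P(0,eᵢ) eᵢ`. -/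
noncomputable def ptEvol {V : Type*} [Fintype V] [DecidableEq V]
    (P : ℕ → V → Matrix V V ℝ) (i : V) : ℕ → V → ℝ
  | 0 => fun j => if j = i then 1 else 0
  | (t + 1) => (P t i).mulVec (ptEvol P i t)

open Classical in
/-- The lifted chain started from `v[X₀] = ∑ᵢ X₀(i) eᵢ ⊗ e₀ ⊗ eᵢ` simulates the
system: for all `t ≤ τ`, the marginal of `M^t v[X₀]` on the third coordinate equals
`X_t`, where `X_t` is defined by linearity from the point-mass evolutions. -/
theorem stmt_16 {V : Type*} [Fintype V] [DecidableEq V]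
    (τ : ℕ) (hτ : 1 ≤ τ)
    (P : ℕ → V → Matrix V V ℝ)
    (hnn : ∀ t i j' j, 0 ≤ P t i j' j)
    (hcol : ∀ t i j, ∑ j', P t i j' j = 1)
    (X₀ : V → ℝ) (hXnn : ∀ i, 0 ≤ X₀ i) (hX1 : ∑ i, X₀ i = 1) :
    ∀ t ≤ τ, ∀ j : V,
      ∑ p ∈ Finset.univ.filter (fun p : V × Fin τ × V => p.2.2 = j),
          ((liftedChain τ P) ^ t).mulVec
            (fun p : V × Fin τ × V =>
              if p.1 = p.2.2 ∧ (p.2.1 : ℕ) = 0 then X₀ p.1 else 0) p =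
        ∑ i, X₀ i * ptEvol P i t j := by
  set M := liftedChain τ P with hM
  set v : V × Fin τ × V → ℝ :=
    (fun p : V × Fin τ × V =>
      if p.1 = p.2.2 ∧ (p.2.1 : ℕ) = 0 then X₀ p.1 else 0) with hv
  have key : ∀ t, t < τ → (M ^ t).mulVec v =
      fun p : V × Fin τ × V =>
        if (p.2.1 : ℕ) = t then X₀ p.1 * ptEvol P p.1 t p.2.2 else 0 := by
    intro t
    induction t with
    | zero =>
      intro ht
      funext p
      simp only [pow_zero, Matrix.one_mulVec, hv, ptEvol]
      by_cases h1 : (p.2.1 : ℕ) = 0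
      · by_cases h2 : p.1 = p.2.2
        · simp [h1, h2]
        · have h3 : ¬ p.2.2 = p.1 := fun hc => h2 hc.symm
          simp [h1, h2, h3]
      · simp [h1]
    | succ t ih =>
      intro ht
      have htτ : t < τ := Nat.lt_of_succ_lt ht
      set tF : Fin τ := ⟨t, htτ⟩ with htF
      funext p'
      rw [pow_succ', ← Matrix.mulVec_mulVec, ih htτ]
      simp only [Matrix.mulVec, dotProduct, Fintype.sum_prod_type]
      have hstep : ∀ i : V, (∑ s : Fin τ, ∑ j : V,
          M p' (i, s, j) * (if (s : ℕ) = t then X₀ i * ptEvol P i t j else 0)) =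
          ∑ j : V, M p' (i, tF, j) * (X₀ i * ptEvol P i t j) := by
        intro i
        rw [Finset.sum_eq_single tF]
        · simp [htF]
        · intro s _ hst
          have hs : ¬ (s : ℕ) = t := fun hc => hst (Fin.ext hc)
          simp [hs]
        · simp
      simp only [hstep]
      have hMval : ∀ i j : V, M p' (i, tF, j) =
          if p'.1 = i ∧ p'.2.1 = ⟨t + 1, ht⟩ then P t i p'.2.2 j else 0 := by
        intro i j
        simp only [hM, liftedChain, htF]
        rw [dif_pos ht]
      simp only [hMval, ite_mul, zero_mul]
      by_cases hp : p'.2.1 = (⟨t + 1, ht⟩ : Fin τ)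
      · have hp' : (p'.2.1 : ℕ) = t + 1 := by rw [hp]
        rw [if_pos hp']
        rw [Finset.sum_eq_single p'.1]
        · simp only [hp, eq_self_iff_true, and_self, true_and, if_true]
          show ∑ j : V, P t p'.1 p'.2.2 j * (X₀ p'.1 * ptEvol P p'.1 t j) =
            X₀ p'.1 * ptEvol P p'.1 (t+1) p'.2.2
          simp only [ptEvol, Matrix.mulVec, dotProduct, Finset.mul_sum]
          apply Finset.sum_congr rfl
          intro j _
          ring
        · intro i _ hi
          apply Finset.sum_eq_zero
          intro j _
          have : ¬ (p'.1 = i ∧ p'.2.1 = (⟨t + 1, ht⟩ : Fin τ)) := by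
            intro hc; exact hi hc.1.symm
          rw [if_neg this]
        · simp
      · have hp' : ¬ (p'.2.1 : ℕ) = t + 1 := fun hc => hp (Fin.ext hc)
        rw [if_neg hp']
        apply Finset.sum_eq_zero; intro i _
        apply Finset.sum_eq_zero; intro j _
        have : ¬ (p'.1 = i ∧ p'.2.1 = (⟨t + 1, ht⟩ : Fin τ)) := fun hc => hp hc.2
        rw [if_neg this]
  intro t htτ j
  rcases lt_or_eq_of_le htτ with ht | rfl
  · rw [key t ht]
    rw [Finset.sum_filter]
    rw [Fintype.sum_prod_type]
    apply Finset.sum_congr rfl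
    intro i _
    rw [Fintype.sum_prod_type]
    rw [Finset.sum_eq_single (⟨t, ht⟩ : Fin τ)]
    · simp
    · intro s _ hst
      have hs : ¬ (s : ℕ) = t := fun hc => hst (Fin.ext hc)
      apply Finset.sum_eq_zero; intro j' _
      simp [hs]
    · simp
  · -- t = τ
    obtain ⟨n, rfl⟩ : ∃ n, t = n + 1 := ⟨t - 1, (Nat.succ_pred_eq_of_pos hτ).symm⟩
    have hlt : n < n + 1 := Nat.lt_succ_self n
    set tF : Fin (n+1) := ⟨n, hlt⟩ with htF
    have step : ∀ p' : V × Fin (n+1) × V, (M ^ (n+1)).mulVec v p' =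
        if (p'.2.1 : ℕ) = 0 ∧ p'.1 = p'.2.2 then
          ∑ i, X₀ i * ptEvol P i (n+1) p'.2.2 else 0 := by
      intro p'
      rw [pow_succ', ← Matrix.mulVec_mulVec, key n hlt]
      simp only [Matrix.mulVec, dotProduct, Fintype.sum_prod_type]
      have hstep : ∀ i : V, (∑ s : Fin (n+1), ∑ j' : V,
          M p' (i, s, j') * (if (s : ℕ) = n then X₀ i * ptEvol P i n j' else 0)) =
          ∑ j' : V, M p' (i, tF, j') * (X₀ i * ptEvol P i n j') := by
        intro i
        rw [Finset.sum_eq_single tF]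
        · simp [htF]
        · intro s _ hst
          have hs : ¬ (s : ℕ) = n := fun hc => hst (Fin.ext hc)
          simp [hs]
        · simp
      simp only [hstep]
      have hMval : ∀ i j' : V, M p' (i, tF, j') =
          if (p'.2.1 : ℕ) = 0 ∧ p'.1 = p'.2.2 then P n i p'.2.2 j' else 0 := by
        intro i j'
        simp only [hM, liftedChain, htF]
        rw [dif_neg (by omega)]
      simp only [hMval, ite_mul, zero_mul]
      by_cases hp : (p'.2.1 : ℕ) = 0 ∧ p'.1 = p'.2.2
      · rw [if_pos hp]
        simp only [if_pos hp]
        apply Finset.sum_congr rfl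
        intro i _
        show ∑ j' : V, P n i p'.2.2 j' * (X₀ i * ptEvol P i n j') =
          X₀ i * ptEvol P i (n+1) p'.2.2
        simp only [ptEvol, Matrix.mulVec, dotProduct, Finset.mul_sum]
        apply Finset.sum_congr rfl
        intro j' _
        ring
      · rw [if_neg hp]
        apply Finset.sum_eq_zero; intro i _
        simp only [if_neg hp]
        exact Finset.sum_eq_zero fun _ _ => rfl
    rw [Finset.sum_filter]
    rw [Fintype.sum_prod_type]
    rw [Finset.sum_eq_single j]
    · rw [Fintype.sum_prod_type]
      rw [Finset.sum_eq_single (⟨0, Nat.succ_pos n⟩ : Fin (n+1))]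
      · rw [Finset.sum_eq_single j]
        · rw [if_pos rfl, step]
          simp
        · intro b _ hb
          rw [if_neg hb]
        · simp
      · intro s _ hs
        apply Finset.sum_eq_zero
        intro j' _
        by_cases hj : j' = j
        · rw [if_pos hj, step]
          have : ¬ (s : ℕ) = 0 := fun hc => hs (Fin.ext hc)
          simp [this]
        · rw [if_neg hj]
      · simp
    · intro i _ hi
      rw [Fintype.sum_prod_type]
      apply Finset.sum_eq_zero; intro s _
      apply Finset.sum_eq_zero; intro j' _
      by_cases hj : j' = j
      · rw [if_pos hj, step]
        have : ¬ i = j' := by rw [hj]; exact hi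
        simp [this]
      · rw [if_neg hj]
    · simp
end
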